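/- Let g,d ∈ ℕ* and (a_{−g},…,a_d) ∈ [0,1]^{g+d+1} with a_{−g} > 0, a_d > 0, ∑_{k=−g}^{d} a_k = 1 and ∑_{k=−g}^{d} k·a_k < 0, and assume additionally that φ(t) < t^{ln δ̂ / ln γ̂} for all t ∈ (1,γ̂). For λ ∈ Λ := {λ ∈ ℂ : δ̂ < |λ| < 1} set τ(λ) := ln|λ|/ln δ̂ and let N′(λ) be the number of roots of E_λ of modulus strictly less than γ̂^{τ(λ)}, counted with multiplicity. Then N′(·) is constant on Λ: there exists η′ ≥ 1 with N′(λ) = η′ for every λ ∈ Λ. -/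

import Mathlib

/-!
Fix `λ` in the annulus and put `r := γ̂ ^ τ(λ)`. Since `0 < τ(λ) < 1` we have `1 < r < γ̂` and
`r ^ (ln δ̂ / ln γ̂) = |λ|`, so the extra hypothesis gives `φ(r) < |λ|`. As the `a_k` are
nonnegative, `|∑ a_k z^{g+k}| ≤ r^g φ(r) < |λ z^g|` on the circle `|z| = r`, and Rouché's theorem
says that `E_λ` has as many roots in `|z| < r` as `λ z^g`, namely `g`; hence `N'(λ) = g`.

Rouché's theorem is replaced by continuity of roots: the number of roots in an open disc of a
monic polynomial of fixed degree is locally constant in its coefficients as long as no root lies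
on the boundary circle. The monic family
`X^{g+d} + a_d⁻¹ (s · ∑_{k<d} a_k X^{g+k} - λ X^g)`, `s ∈ [0, 1]`, has no root on `|z| = r`, by
the same estimate, and joins `X^g (X^d - λ / a_d)`, whose roots in the disc are `g` zeros, to
`E_λ / a_d`.
-/

/-- `φ(t) := ∑_{k=-g}^{d} a_k t^k`. -/
noncomputable def phiF (g d : ℕ) (a : ℤ → ℝ) (t : ℝ) : ℝ :=
  ∑ k ∈ Finset.Icc (-(g : ℤ)) (d : ℤ), a k * t ^ k

/-- The polynomial `E_λ(z) := ∑_{k=-g}^{d} a_k z^{g+k} - λ z^g`. -/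
noncomputable def Epoly (g d : ℕ) (a : ℤ → ℝ) (lam : ℂ) : Polynomial ℂ :=
  (∑ k ∈ Finset.Icc (-(g : ℤ)) (d : ℤ),
      Polynomial.C ((a k : ℝ) : ℂ) * Polynomial.X ^ ((g : ℤ) + k).toNat)
    - Polynomial.C lam * Polynomial.X ^ g

open scoped Classical in
/-- `N'(λ)`: number of roots of `E_λ` of modulus `< γ̂^{τ(λ)}` with
`τ(λ) = ln|λ|/ln δ̂`, counted with multiplicity. Here `δhat = φ(γ̂)`. -/
noncomputable def Ncount' (g d : ℕ) (a : ℤ → ℝ) (γhat δhat : ℝ) (lam : ℂ) : ℕ :=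
  Multiset.card (Multiset.filter
    (fun z : ℂ => ‖z‖ < γhat ^ (Real.log ‖lam‖ / Real.log δhat))
    (Epoly g d a lam).roots)

open Polynomial Filter Finset Topology

theorem Multiset.card_filter_eq_of_rel {α β : Type*} {p : α → Prop} {q : β → Prop}
    [DecidablePred p] [DecidablePred q] {s : Multiset α} {t : Multiset β}
    (h : Multiset.Rel (fun x y => (p x ↔ q y)) s t) :
    card (s.filter p) = card (t.filter q) := by
  induction h with
  | zero => rfl
  | @cons a b _ _ hab _ ih => by_cases hp : p a <;> simp [← hab, hp, ih]

namespace Polynomial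

theorem pow_natDegree_le_norm_eval {P : ℂ[X]} (hP : P.Monic) {z : ℂ} {ε : ℝ} (hε : 0 ≤ ε)
    (h : ∀ x ∈ P.roots, ε ≤ ‖z - x‖) : ε ^ P.natDegree ≤ ‖P.eval z‖ := by
  have hsplit := IsAlgClosed.splits P
  rw [hsplit.eval_eq_prod_roots_of_monic hP, ← normHom_apply, map_multiset_prod, Multiset.map_map,
    hsplit.natDegree_eq_card_roots, ← Multiset.prod_replicate, ← Multiset.map_const']
  exact Multiset.prod_map_le_prod_map₀ _ _ (fun _ _ => hε) h

theorem tendsto_eval_of_tendsto_coeff {ι : Type*} {l : Filter ι} {F : ι → ℂ[X]} {P : ℂ[X]}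
    {n : ℕ} (hF : ∀ i, (F i).natDegree ≤ n) (hP : P.natDegree ≤ n)
    (hc : ∀ j, Tendsto (fun i => (F i).coeff j) l (𝓝 (P.coeff j))) (z : ℂ) :
    Tendsto (fun i => (F i).eval z) l (𝓝 (P.eval z)) := by
  simp only [eval_eq_sum_range' (Nat.lt_succ_of_le (hF _)),
    eval_eq_sum_range' (Nat.lt_succ_of_le hP)]
  exact tendsto_finsetSum _ fun j _ => (hc j).mul tendsto_const_nhds

theorem exists_tendsto_mem_roots {ι : Type*} {l : Filter ι} {F : ι → ℂ[X]} {n : ℕ} (hn : n ≠ 0)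
    (hF : ∀ i, (F i).Monic) (hdeg : ∀ i, (F i).natDegree = n) {z : ℂ}
    (hz : Tendsto (fun i => (F i).eval z) l (𝓝 0)) :
    ∃ w : ι → ℂ, (∀ i, w i ∈ (F i).roots) ∧ Tendsto w l (𝓝 z) := by
  have hne : ∀ i, (F i).roots.toFinset.Nonempty := fun i => by
    rw [Multiset.toFinset_nonempty, ← Multiset.card_pos,
      ← (IsAlgClosed.splits (F i)).natDegree_eq_card_roots, hdeg i]
    exact Nat.pos_of_ne_zero hn
  choose w hw hmin using fun i => (F i).roots.toFinset.exists_min_image (fun x => ‖z - x‖) (hne i)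
  refine ⟨w, fun i => Multiset.mem_toFinset.mp (hw i), Metric.tendsto_nhds.mpr fun ε hε => ?_⟩
  filter_upwards [(tendsto_norm_zero.comp hz).eventually_lt_const (pow_pos hε n)] with i hi
  by_contra! hfar
  refine hi.not_ge (hdeg i ▸ pow_natDegree_le_norm_eval (hF i) hε.le fun x hx => ?_)
  rw [dist_eq_norm, norm_sub_rev] at hfar
  exact hfar.trans (hmin i x (Multiset.mem_toFinset.mpr hx))

theorem Monic.divByMonic_X_sub_C {R : Type*} [CommRing R] {p : R[X]} (hp : p.Monic) {x : R}
    (hx : p.IsRoot x) : (p /ₘ (X - C x)).Monic :=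
  (monic_X_sub_C x).of_mul_monic_left (by rwa [mul_divByMonic_eq_iff_isRoot.mpr hx])

theorem roots_eq_cons_roots_divByMonic {R : Type*} [CommRing R] [IsDomain R] {p : R[X]}
    (hp : p ≠ 0) {x : R} (hx : p.IsRoot x) : p.roots = x ::ₘ (p /ₘ (X - C x)).roots := by
  conv_lhs => rw [← mul_divByMonic_eq_iff_isRoot.mpr hx]
  rw [roots_mul (by rwa [mul_divByMonic_eq_iff_isRoot.mpr hx]), roots_X_sub_C,
    Multiset.singleton_add]

theorem tendsto_coeff_divByMonic_X_sub_C {ι : Type*} {l : Filter ι} {F : ι → ℂ[X]} {P : ℂ[X]}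
    (hdeg : ∀ i, (F i).natDegree = P.natDegree)
    (hc : ∀ j, Tendsto (fun i => (F i).coeff j) l (𝓝 (P.coeff j)))
    {w : ι → ℂ} {z : ℂ} (hw : Tendsto w l (𝓝 z)) (j : ℕ) :
    Tendsto (fun i => (F i /ₘ (X - C (w i))).coeff j) l (𝓝 ((P /ₘ (X - C z)).coeff j)) := by
  simp only [coeff_divByMonic_X_sub_C, hdeg]
  exact tendsto_finsetSum _ fun m _ => (hw.pow _).mul (hc m)

theorem eventually_rel_roots_of_tendsto_coeff {ι : Type*} {l : Filter ι} {R : ℂ → ℂ → Prop}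
    (n : ℕ) {F : ι → ℂ[X]} {P : ℂ[X]} (hF : ∀ i, (F i).Monic) (hP : P.Monic)
    (hdF : ∀ i, (F i).natDegree = n) (hdP : P.natDegree = n)
    (hc : ∀ j, Tendsto (fun i => (F i).coeff j) l (𝓝 (P.coeff j)))
    (hR : ∀ y ∈ P.roots, ∀ᶠ x in 𝓝 y, R x y) :
    ∀ᶠ i in l, Multiset.Rel R (F i).roots P.roots := by
  induction n generalizing F P with
  | zero =>
    refine Eventually.of_forall fun i => ?_
    rw [(hF i).natDegree_eq_zero.mp (hdF i), hP.natDegree_eq_zero.mp hdP, roots_one]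
    exact Multiset.Rel.zero
  | succ n ih =>
    obtain ⟨z, hz⟩ := IsAlgClosed.exists_root P <| by
      rw [degree_eq_natDegree hP.ne_zero, hdP]; exact_mod_cast n.succ_ne_zero
    have hFz : Tendsto (fun i => (F i).eval z) l (𝓝 0) :=
      hz ▸ tendsto_eval_of_tendsto_coeff (hdF · |>.le) hdP.le hc z
    obtain ⟨w, hw, hwz⟩ := exists_tendsto_mem_roots n.succ_ne_zero hF hdF hFz
    have hwroot i : (F i).IsRoot (w i) := isRoot_of_mem_roots (hw i)
    have hProots := roots_eq_cons_roots_divByMonic hP.ne_zero hz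
    have hdeg_div {p : ℂ[X]} {x : ℂ} (hp : p.natDegree = n + 1) :
        (p /ₘ (X - C x)).natDegree = n := by
      rw [natDegree_divByMonic _ (monic_X_sub_C x), hp, natDegree_X_sub_C, Nat.add_sub_cancel]
    have hrest := ih (fun i => (hF i).divByMonic_X_sub_C (hwroot i)) (hP.divByMonic_X_sub_C hz)
      (fun i => hdeg_div (hdF i)) (hdeg_div hdP)
      (tendsto_coeff_divByMonic_X_sub_C (fun i => (hdF i).trans hdP.symm) hc hwz)
      (fun y hy => hR y (hProots ▸ Multiset.mem_cons_of_mem hy))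
    filter_upwards [hrest, hwz.eventually (hR z (hProots ▸ Multiset.mem_cons_self z _))]
      with i hi hwi
    rw [roots_eq_cons_roots_divByMonic (hF i).ne_zero (hwroot i), hProots]
    exact Multiset.Rel.cons hwi hi

theorem eventually_card_filter_roots_norm_lt_eq {ι : Type*} {l : Filter ι} {F : ι → ℂ[X]}
    {P : ℂ[X]} {n : ℕ} (hF : ∀ i, (F i).Monic) (hP : P.Monic)
    (hdF : ∀ i, (F i).natDegree = n) (hdP : P.natDegree = n)
    (hc : ∀ j, Tendsto (fun i => (F i).coeff j) l (𝓝 (P.coeff j)))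
    {r : ℝ} (hr : ∀ y ∈ P.roots, ‖y‖ ≠ r) :
    ∀ᶠ i in l, Multiset.card ((F i).roots.filter (‖·‖ < r)) =
      Multiset.card (P.roots.filter (‖·‖ < r)) := by
  refine (eventually_rel_roots_of_tendsto_coeff n hF hP hdF hdP hc fun y hy => ?_).mono
    fun i => Multiset.card_filter_eq_of_rel
  have hy_cont := continuous_norm.tendsto y
  rcases (hr y hy).lt_or_gt with hlt | hgt
  · filter_upwards [hy_cont.eventually_lt_const hlt] with x hx
    exact iff_of_true hx hlt
  · filter_upwards [hy_cont.eventually_const_lt hgt] with x hx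
    exact iff_of_false hx.not_gt hgt.not_gt

theorem card_filter_roots_norm_lt_eq_of_continuous {X : Type*} [TopologicalSpace X]
    [PreconnectedSpace X] {F : X → ℂ[X]} {n : ℕ} (hF : ∀ t, (F t).Monic)
    (hdeg : ∀ t, (F t).natDegree = n) (hcont : ∀ j, Continuous fun t => (F t).coeff j)
    {r : ℝ} (hr : ∀ t, ∀ y ∈ (F t).roots, ‖y‖ ≠ r) (s t : X) :
    Multiset.card ((F s).roots.filter (‖·‖ < r)) = Multiset.card ((F t).roots.filter (‖·‖ < r)) :=
  IsLocallyConstant.apply_eq_of_preconnectedSpace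
    ((IsLocallyConstant.iff_eventually_eq _).mpr fun t =>
      eventually_card_filter_roots_norm_lt_eq hF (hF t) hdeg (hdeg t)
        (fun j => (hcont j).tendsto t) (hr t)) s t

theorem card_filter_roots_X_pow_mul_X_pow_sub_C_norm_lt (g : ℕ) {d : ℕ} (hd : d ≠ 0) {c : ℂ} {r : ℝ}
    (hr : 0 < r) (hc : r ^ d < ‖c‖) :
    Multiset.card ((X ^ g * (X ^ d - C c)).roots.filter (‖·‖ < r)) = g := by
  have hd' := Nat.pos_of_ne_zero hd
  rw [roots_mul (mul_ne_zero (pow_ne_zero g X_ne_zero) (X_pow_sub_C_ne_zero hd' c)), roots_X_pow,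
    Multiset.filter_add, Multiset.filter_eq_self.mpr, Multiset.filter_eq_nil.mpr, add_zero,
    Multiset.card_nsmul, Multiset.card_singleton, mul_one]
  · intro x hx hxr
    have hxc : x ^ d = c := (mem_nthRoots hd').mp hx
    exact (hc.trans_le (hxc ▸ (norm_pow x d).le)).not_ge
      (pow_le_pow_left₀ (norm_nonneg x) hxr.le d)
  · intro x hx
    rw [Multiset.mem_singleton.mp (Multiset.mem_of_mem_nsmul hx), norm_zero]
    exact hr

end Polynomial

theorem Real.log_div_log_mem_Ioo {δ L : ℝ} (hδ : 0 < δ) (hδL : δ < L) (hL : L < 1) :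
    Real.log L / Real.log δ ∈ Set.Ioo 0 1 := by
  have hlogL : Real.log L < 0 := Real.log_neg (hδ.trans hδL) hL
  refine ⟨div_pos_of_neg_of_neg hlogL (Real.log_neg hδ (hδL.trans hL)), ?_⟩
  rw [div_lt_one_of_neg (Real.log_neg hδ (hδL.trans hL))]
  exact Real.log_lt_log hδ hδL

theorem Real.rpow_log_div_log_rpow_log_div_log {γ δ L : ℝ} (hγ : 0 < γ) (hγ1 : γ ≠ 1)
    (hδ : Real.log δ ≠ 0) (hL : 0 < L) :
    (γ ^ (Real.log L / Real.log δ)) ^ (Real.log δ / Real.log γ) = L := by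
  rw [← Real.rpow_mul hγ.le, div_mul_div_cancel₀ hδ, Real.log_div_log, Real.rpow_logb hγ hγ1 hL]

theorem Finset.sum_Icc_neg_eq_sum_range {M : Type*} [AddCommMonoid M] (g d : ℕ) (h : ℤ → M) :
    ∑ k ∈ Icc (-(g : ℤ)) d, h k = ∑ j ∈ range (g + d + 1), h (j - g) := by
  refine sum_nbij' (fun k => (g + k).toNat) (fun j => j - g) ?_ ?_ ?_ ?_ ?_ <;>
    intro x hx <;> simp only [mem_Icc, mem_range] at hx ⊢
  all_goals first | omega | congr 1; omega

/-- The terms `a_k X^{g+k}`, `k < d`, of `E_λ`, indexed by `j = g + k`. -/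
noncomputable def lowerTerms (g d : ℕ) (a : ℤ → ℝ) : ℂ[X] :=
  ∑ i : Fin (g + d), C (a (i - g) : ℂ) * X ^ (i : ℕ)

theorem Epoly_eq_lowerTerms (g d : ℕ) (a : ℤ → ℝ) (lam : ℂ) :
    Epoly g d a lam = lowerTerms g d a + C (a d : ℂ) * X ^ (g + d) - C lam * X ^ g := by
  rw [Epoly, lowerTerms, sum_Icc_neg_eq_sum_range, sum_range_succ, Fin.sum_univ_eq_sum_range
    (fun j => C (a (j - g) : ℂ) * X ^ j)]
  congr 2
  · refine sum_congr rfl fun j _ => ?_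
    congr 2; omega
  · congr 3 <;> first | omega | congr 1; omega

theorem sum_range_add_eq_pow_mul_phiF (g d : ℕ) (a : ℤ → ℝ) {t : ℝ} (ht : t ≠ 0) :
    ∑ j ∈ range (g + d), a (j - g) * t ^ j + a d * t ^ (g + d) = t ^ g * phiF g d a t := by
  rw [phiF, sum_Icc_neg_eq_sum_range, sum_range_succ, mul_add, mul_sum]
  congr 1
  · refine sum_congr rfl fun j _ => ?_
    rw [mul_left_comm, ← zpow_natCast, ← zpow_natCast, ← zpow_add₀ ht]
    ring_nf
  · rw [mul_left_comm, ← zpow_natCast, ← zpow_natCast, ← zpow_add₀ ht]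
    push_cast; ring_nf

noncomputable def EpolyHomotopy (g d : ℕ) (a : ℤ → ℝ) (lam : ℂ) (s : ℝ) : ℂ[X] :=
  X ^ (g + d) + (a d : ℂ)⁻¹ • ((s : ℂ) • lowerTerms g d a - C lam * X ^ g)

section EpolyHomotopy

variable {g d : ℕ} {a : ℤ → ℝ} {lam : ℂ}

theorem degree_EpolyHomotopy_sub_lt (hd : d ≠ 0) (s : ℝ) :
    (EpolyHomotopy g d a lam s - X ^ (g + d)).degree < ↑(g + d) := by
  rw [EpolyHomotopy, add_sub_cancel_left]
  refine (degree_smul_le _ _).trans_lt <| (degree_sub_le _ _).trans_lt <| max_lt ?_ ?_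
  · exact (degree_smul_le _ _).trans_lt (degree_sum_fin_lt _)
  · exact (degree_C_mul_X_pow_le _ _).trans_lt
      (by exact_mod_cast Nat.lt_add_of_pos_right (Nat.pos_of_ne_zero hd))

theorem EpolyHomotopy_monic (hd : d ≠ 0) (s : ℝ) : (EpolyHomotopy g d a lam s).Monic := by
  simpa using monic_X_pow_add (degree_EpolyHomotopy_sub_lt (a := a) (lam := lam) hd s)

theorem natDegree_EpolyHomotopy (hd : d ≠ 0) (s : ℝ) :
    (EpolyHomotopy g d a lam s).natDegree = g + d := by
  rw [← add_sub_cancel (X ^ (g + d)) (EpolyHomotopy g d a lam s),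
    natDegree_add_eq_left_of_degree_lt, natDegree_X_pow]
  rw [degree_X_pow]
  exact degree_EpolyHomotopy_sub_lt hd s

theorem continuous_coeff_EpolyHomotopy (j : ℕ) :
    Continuous fun s => (EpolyHomotopy g d a lam s).coeff j := by
  simp only [EpolyHomotopy, coeff_add, coeff_smul, coeff_sub, smul_eq_mul]
  fun_prop

theorem EpolyHomotopy_zero : EpolyHomotopy g d a lam 0 = X ^ g * (X ^ d - C (lam / a d)) := by
  simp only [EpolyHomotopy, Complex.ofReal_zero, zero_smul, zero_sub, smul_eq_C_mul]
  rw [div_eq_inv_mul, C_mul]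
  ring

theorem EpolyHomotopy_one (had : a d ≠ 0) :
    EpolyHomotopy g d a lam 1 = C (a d : ℂ)⁻¹ * Epoly g d a lam := by
  rw [Epoly_eq_lowerTerms, EpolyHomotopy, Complex.ofReal_one, one_smul, smul_eq_C_mul]
  have hinv : C (a d : ℂ)⁻¹ * C (a d : ℂ) = 1 := by
    rw [← C_mul, inv_mul_cancel₀ (by exact_mod_cast had), C_1]
  linear_combination (-X ^ (g + d) : ℂ[X]) * hinv

end EpolyHomotopy

section NonnegCoeffs

variable {g d : ℕ} {a : ℤ → ℝ} (ha : ∀ k ∈ Icc (-(g : ℤ)) d, 0 ≤ a k)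
include ha

theorem coeff_shift_nonneg {j : ℕ} (hj : j < g + d) : 0 ≤ a (j - g) :=
  ha _ (by simp only [mem_Icc]; omega)

theorem sum_range_coeff_mul_pow_nonneg {t : ℝ} (ht : 0 ≤ t) :
    0 ≤ ∑ j ∈ range (g + d), a (j - g) * t ^ j :=
  sum_nonneg fun j hj => mul_nonneg (coeff_shift_nonneg ha (mem_range.mp hj)) (pow_nonneg ht j)

theorem phiF_pos (hag : 0 < a (-g)) {t : ℝ} (ht : 0 < t) : 0 < phiF g d a t :=
  sum_pos' (fun k hk => mul_nonneg (ha k hk) (zpow_pos ht k).le)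
    ⟨-g, by simp only [mem_Icc]; omega, mul_pos hag (zpow_pos ht _)⟩

theorem norm_eval_lowerTerms_le (z : ℂ) :
    ‖(lowerTerms g d a).eval z‖ ≤ ∑ j ∈ range (g + d), a (j - g) * ‖z‖ ^ j := by
  rw [lowerTerms, eval_finsetSum, ← Fin.sum_univ_eq_sum_range (fun j => a (j - g) * ‖z‖ ^ j)]
  refine norm_sum_le_of_le _ fun i _ => le_of_eq ?_
  rw [eval_mul, eval_C, eval_pow, eval_X, norm_mul, norm_pow, Complex.norm_real, Real.norm_eq_abs,
    abs_of_nonneg (coeff_shift_nonneg ha i.2)]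

theorem coeff_top_mul_pow_le_phiF {t : ℝ} (ht : 0 < t) : a d * t ^ d ≤ phiF g d a t := by
  refine le_of_mul_le_mul_left ?_ (pow_pos ht g)
  rw [← sum_range_add_eq_pow_mul_phiF g d a ht.ne', pow_add]
  linarith [sum_range_coeff_mul_pow_nonneg ha ht.le]

theorem eval_EpolyHomotopy_ne_zero (had : 0 < a d) {lam : ℂ} {s : ℝ} (hs : s ∈ Set.Icc 0 1)
    {z : ℂ} (hz : z ≠ 0) (hφ : phiF g d a ‖z‖ < ‖lam‖) :
    (EpolyHomotopy g d a lam s).eval z ≠ 0 := by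
  intro h0
  have had' : (a d : ℂ) ≠ 0 := by exact_mod_cast had.ne'
  have hbalance : (a d : ℂ) * z ^ (g + d) + s * (lowerTerms g d a).eval z = lam * z ^ g := by
    simp only [EpolyHomotopy, eval_add, eval_smul, eval_sub, eval_mul, eval_C, eval_pow, eval_X,
      smul_eq_mul] at h0
    field_simp at h0
    linear_combination h0
  have hz' : 0 < ‖z‖ := norm_pos_iff.mpr hz
  have hlow := sum_range_coeff_mul_pow_nonneg ha hz'.le
  have hsplit := sum_range_add_eq_pow_mul_phiF g d a hz'.ne'
  have : ‖lam‖ * ‖z‖ ^ g < ‖lam‖ * ‖z‖ ^ g := calc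
    ‖lam‖ * ‖z‖ ^ g = ‖(a d : ℂ) * z ^ (g + d) + s * (lowerTerms g d a).eval z‖ := by
      rw [hbalance, norm_mul, norm_pow]
    _ ≤ a d * ‖z‖ ^ (g + d) + s * ∑ j ∈ range (g + d), a (j - g) * ‖z‖ ^ j := by
      refine (norm_add_le _ _).trans (add_le_add (le_of_eq ?_) ?_)
      · rw [norm_mul, norm_pow, Complex.norm_real, Real.norm_of_nonneg had.le]
      · rw [norm_mul, Complex.norm_real, Real.norm_of_nonneg hs.1]
        exact mul_le_mul_of_nonneg_left (norm_eval_lowerTerms_le ha z) hs.1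
    _ ≤ ‖z‖ ^ g * phiF g d a ‖z‖ := by nlinarith [hs.2]
    _ < ‖lam‖ * ‖z‖ ^ g := by rw [mul_comm]; gcongr
  exact this.false

theorem card_filter_roots_Epoly_norm_lt (hd : d ≠ 0) (had : 0 < a d) {lam : ℂ} {r : ℝ} (hr : 0 < r)
    (hφ : phiF g d a r < ‖lam‖) :
    Multiset.card ((Epoly g d a lam).roots.filter (‖·‖ < r)) = g := by
  have hconst := card_filter_roots_norm_lt_eq_of_continuous
    (F := fun s : unitInterval => EpolyHomotopy g d a lam s)
    (fun s => EpolyHomotopy_monic hd s) (fun s => natDegree_EpolyHomotopy hd s)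
    (fun j => (continuous_coeff_EpolyHomotopy j).comp continuous_subtype_val)
    (fun s y hy hyr => eval_EpolyHomotopy_ne_zero ha had s.2 (norm_pos_iff.mp (hyr ▸ hr))
      (hyr ▸ hφ) (isRoot_of_mem_roots hy)) 1 0
  simp only [Set.Icc.coe_one, Set.Icc.coe_zero, EpolyHomotopy_one had.ne', EpolyHomotopy_zero]
    at hconst
  rw [roots_C_mul _ (by simpa using had.ne')] at hconst
  rw [hconst]
  refine card_filter_roots_X_pow_mul_X_pow_sub_C_norm_lt g hd hr ?_
  rw [norm_div, Complex.norm_real, Real.norm_of_nonneg had.le, lt_div_iff₀ had, mul_comm]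
  exact (coeff_top_mul_pow_le_phiF ha hr).trans_lt hφ

end NonnegCoeffs

theorem Ncount'_constant_on_annulus_general
    (g d : ℕ) (hg : 1 ≤ g) (hd : 1 ≤ d) (a : ℤ → ℝ)
    (ha01 : ∀ k ∈ Finset.Icc (-(g : ℤ)) (d : ℤ), 0 ≤ a k ∧ a k ≤ 1)
    (hag : 0 < a (-(g : ℤ))) (had : 0 < a (d : ℤ))
    (γhat : ℝ) (hγhat1 : 1 < γhat)
    (hpsi : ∀ t : ℝ, 1 < t → t < γhat →
      phiF g d a t < t ^ (Real.log (phiF g d a γhat) / Real.log γhat)) :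
    ∃ η' : ℕ, 1 ≤ η' ∧ ∀ lam : ℂ,
      phiF g d a γhat < ‖lam‖ → ‖lam‖ < 1 →
      Ncount' g d a γhat (phiF g d a γhat) lam = η' := by
  refine ⟨g, hg, fun lam hδlam hlam1 => ?_⟩
  have ha k hk : 0 ≤ a k := (ha01 k hk).1
  have hδ : 0 < phiF g d a γhat := phiF_pos ha hag (by linarith)
  obtain ⟨hτ0, hτ1⟩ := Real.log_div_log_mem_Ioo hδ hδlam hlam1
  have hr1 := Real.one_lt_rpow hγhat1 hτ0
  have hφ := hpsi _ hr1 (by simpa using Real.rpow_lt_rpow_of_exponent_lt hγhat1 hτ1)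
  rw [Real.rpow_log_div_log_rpow_log_div_log (by linarith) hγhat1.ne'
    (Real.log_neg hδ (hδlam.trans hlam1)).ne (hδ.trans hδlam)] at hφ
  exact card_filter_roots_Epoly_norm_lt ha (by omega) had (by linarith) hφ

/-- under the additional condition `φ(t) < t^{ln δ̂ / ln γ̂}` on `(1,γ̂)`,
the refined root-counting function `N'(·)` is a constant `η' ≥ 1` on the annulus
`Λ = {λ : δ̂ < |λ| < 1}`. -/
theorem Ncount'_constant_on_annulus
    (g d : ℕ) (hg : 1 ≤ g) (hd : 1 ≤ d) (a : ℤ → ℝ)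
    (ha01 : ∀ k ∈ Finset.Icc (-(g : ℤ)) (d : ℤ), 0 ≤ a k ∧ a k ≤ 1)
    (hag : 0 < a (-(g : ℤ))) (had : 0 < a (d : ℤ))
    (hsum : ∑ k ∈ Finset.Icc (-(g : ℤ)) (d : ℤ), a k = 1)
    (hneri : ∑ k ∈ Finset.Icc (-(g : ℤ)) (d : ℤ), (k : ℝ) * a k < 0)
    (γhat : ℝ) (hγhat1 : 1 < γhat)
    (hγhatmin : ∀ t : ℝ, 1 < t → phiF g d a γhat ≤ phiF g d a t)
    (hpsi : ∀ t : ℝ, 1 < t → t < γhat →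
      phiF g d a t < t ^ (Real.log (phiF g d a γhat) / Real.log γhat)) :
    ∃ η' : ℕ, 1 ≤ η' ∧ ∀ lam : ℂ,
      phiF g d a γhat < ‖lam‖ → ‖lam‖ < 1 →
      Ncount' g d a γhat (phiF g d a γhat) lam = η' :=
  Ncount'_constant_on_annulus_general g d hg hd a ha01 hag had γhat hγhat1 hpsi
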